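/- Let A be a nonnegative primitive tensor of order m and dimension n, and suppose M(A)_{jj} > 0 for some j ∈ [n]. Then the j-primitive degree satisfies γ_j(A) ≤ n−1; that is, M(A^{n−1})_{uj} > 0 for all u ∈ [n]. -/

import Mathlib

/-! The set `S_k = {u | M(A^k)_{uj} > 0}` evolves by the monotone map
`F(S) = {u | a_{u t} > 0 for some t with all tᵢ ∈ S}`, starting from `S_0 = {j}`.
Since `a_{j⋯j} > 0` we have `S_0 ⊆ S_1`, so the sets `S_k` increase; once two consecutive
ones agree the sequence is constant, and primitivity forces it to reach `[n]`.
Hence each `S_k ≠ [n]` has at least `k + 1` elements, and `S_{n-1} = [n]`. -/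

open Finset

/- An order-`m` dimension-`n` nonnegative tensor is encoded as
`A : Fin n → (Fin (m-1) → Fin n) → ℝ`, with `A i t = a_{i t₁ ⋯ t_{m-1}}`. -/

/-- The majorization matrix `M(A)_{ij} = a_{ij⋯j}`. -/
def maj (n m : ℕ) (A : Fin n → (Fin (m-1) → Fin n) → ℝ) :
    Matrix (Fin n) (Fin n) ℝ :=
  fun i j => A i (fun _ => j)

/-- The majorization matrices of the Shao-product powers of `A`:
`majPow n m A k = M(A^k)`, via the recursion
`M(A^{k+1})_{uj} = Σ_{j₂,…,j_m} a_{u j₂ ⋯ j_m} M(A^k)_{j₂ j} ⋯ M(A^k)_{j_m j}`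
(with `M(A^0)` the identity, so that `majPow n m A 1 = maj n m A`). -/
def majPow (n m : ℕ) (A : Fin n → (Fin (m-1) → Fin n) → ℝ) :
    ℕ → Matrix (Fin n) (Fin n) ℝ
  | 0 => 1
  | k + 1 => fun u j =>
      ∑ t : Fin (m-1) → Fin n, A u t * ∏ i, majPow n m A k (t i) j

/-- `A` is primitive: `M(A^r) > 0` entrywise for some positive `r`. -/
def Primitive (n m : ℕ) (A : Fin n → (Fin (m-1) → Fin n) → ℝ) : Prop :=
  ∃ r, 0 < r ∧ ∀ u j, 0 < majPow n m A r u j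

namespace Finset

variable {α : Type*} [Fintype α] [DecidableEq α]

lemma iterate_eq_univ_or_succ_le_card {F : Finset α → Finset α} (hF : Monotone F)
    {s : Finset α} (hs : s.Nonempty) (hsF : s ⊆ F s) (hreach : ∃ r, F^[r] s = univ) (k : ℕ) :
    F^[k] s = univ ∨ k + 1 ≤ #(F^[k] s) := by
  induction k with
  | zero => exact .inr hs.card_pos
  | succ k ih =>
    have hle : F^[k] s ⊆ F^[k + 1] s := hF.monotone_iterate_of_le_map hsF k.le_succ
    by_cases huniv : F^[k] s = univ
    · exact .inl (univ_subset_iff.1 (huniv ▸ hle))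
    have hne : F^[k + 1] s ≠ F^[k] s := by
      intro hfix
      obtain ⟨r, hr⟩ := hreach
      have hconst : F^[r + k] s = F^[k] s := by
        rw [Function.iterate_add_apply,
          Function.iterate_fixed (by rwa [← Function.iterate_succ_apply' F k])]
      refine huniv (univ_subset_iff.1 ?_)
      calc univ = F^[r] s := hr.symm
        _ ⊆ F^[r + k] s := hF.monotone_iterate_of_le_map hsF (r.le_add_right k)
        _ = F^[k] s := hconst
    have hlt := card_lt_card (ssubset_of_subset_of_ne hle hne.symm)
    have hk := ih.resolve_left huniv
    exact .inr (by omega)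

lemma iterate_card_sub_one_eq_univ {F : Finset α → Finset α} (hF : Monotone F)
    {s : Finset α} (hs : s.Nonempty) (hsF : s ⊆ F s) (hreach : ∃ r, F^[r] s = univ) :
    F^[Fintype.card α - 1] s = univ := by
  have hcard : 0 < Fintype.card α := Fintype.card_pos_iff.2 ⟨hs.choose⟩
  rcases iterate_eq_univ_or_succ_le_card hF hs hsF hreach (Fintype.card α - 1) with h | h
  · exact h
  · exact eq_univ_of_card _ (le_antisymm (card_le_univ _) (by omega))

end Finset

section Support

variable {n m : ℕ} {A : Fin n → (Fin (m-1) → Fin n) → ℝ}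

lemma majPow_nonneg (hA : ∀ u t, 0 ≤ A u t) (k : ℕ) (u v : Fin n) :
    0 ≤ majPow n m A k u v := by
  induction k generalizing u with
  | zero =>
    simp only [majPow, Matrix.one_apply]
    split <;> norm_num
  | succ k ih =>
    exact sum_nonneg fun t _ => mul_nonneg (hA u t) (prod_nonneg fun i _ => ih (t i))

lemma majPow_zero_pos_iff {u j : Fin n} : 0 < majPow n m A 0 u j ↔ u = j := by
  by_cases h : u = j <;> simp [majPow, Matrix.one_apply, h]

lemma majPow_succ_pos_iff (hA : ∀ u t, 0 ≤ A u t) {k : ℕ} {u j : Fin n} :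
    0 < majPow n m A (k + 1) u j ↔ ∃ t, 0 < A u t ∧ ∀ i, 0 < majPow n m A k (t i) j := by
  have hterm (t : Fin (m-1) → Fin n) : 0 ≤ A u t * ∏ i, majPow n m A k (t i) j :=
    mul_nonneg (hA u t) (prod_nonneg fun i _ => majPow_nonneg hA k _ _)
  change 0 < ∑ t, _ ↔ _
  rw [sum_pos_iff_of_nonneg fun t _ => hterm t]
  refine exists_congr fun t => ?_
  rw [(hterm t).lt_iff_ne', mul_ne_zero_iff, prod_ne_zero_iff, (hA u t).lt_iff_ne']
  simp only [mem_univ, true_and, true_implies, fun i => (majPow_nonneg hA k (t i) j).lt_iff_ne']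

variable (A) in
open Classical in
noncomputable def supportStep (S : Finset (Fin n)) : Finset (Fin n) :=
  univ.filter fun u => ∃ t, 0 < A u t ∧ ∀ i, t i ∈ S

lemma supportStep_mono : Monotone (supportStep A) := by
  intro S S' hS u
  simp only [supportStep, mem_filter, mem_univ, true_and]
  exact fun ⟨t, ht, hti⟩ => ⟨t, ht, fun i => hS (hti i)⟩

open Classical in
lemma filter_majPow_pos_eq_iterate (hA : ∀ u t, 0 ≤ A u t) (j : Fin n) (k : ℕ) :
    univ.filter (fun u => 0 < majPow n m A k u j) = (supportStep A)^[k] {j} := by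
  induction k with
  | zero => ext u; simp [majPow_zero_pos_iff]
  | succ k ih =>
    rw [Function.iterate_succ_apply', ← ih]
    ext u
    simp [supportStep, majPow_succ_pos_iff hA]

end Support

theorem stmt_11_general (n m : ℕ)
    (A : Fin n → (Fin (m-1) → Fin n) → ℝ) (hA : ∀ u t, 0 ≤ A u t)
    (hprim : Primitive n m A) (j : Fin n) (hjj : 0 < maj n m A j j) :
    ∀ u : Fin n, 0 < majPow n m A (n - 1) u j := by
  classical
  have hsupp := filter_majPow_pos_eq_iterate hA j
  have hstep : {j} ⊆ supportStep A {j} := by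
    simpa [supportStep] using ⟨fun _ => j, hjj, fun _ => rfl⟩
  have hreach : ∃ r, (supportStep A)^[r] {j} = univ := by
    obtain ⟨r, -, hr⟩ := hprim
    exact ⟨r, by simpa [← hsupp] using fun u => hr u j⟩
  have hall := iterate_card_sub_one_eq_univ supportStep_mono (singleton_nonempty j) hstep hreach
  rw [Fintype.card_fin, ← hsupp] at hall
  intro u
  simpa using eq_univ_iff_forall.1 hall u

/-- if `M(A)_{jj} > 0` then `γ_j(A) ≤ n-1`,
i.e. `M(A^{n-1})_{uj} > 0` for all `u`. -/
theorem stmt_11 (n m : ℕ) (hm : 2 ≤ m)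
    (A : Fin n → (Fin (m-1) → Fin n) → ℝ) (hA : ∀ u t, 0 ≤ A u t)
    (hprim : Primitive n m A) (j : Fin n) (hjj : 0 < maj n m A j j) :
    ∀ u : Fin n, 0 < majPow n m A (n - 1) u j :=
  stmt_11_general n m A hA hprim j hjj
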